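/- arXiv:1608.08815 — 7 statements merged into one kernel-verified Lean document; each statement's English description precedes it below -/
import Mathlib

section
/- Let k be an algebraically closed field of characteristic 2, G a group, and V a finite-dimensional nontrivial irreducible k-linear representation of G that is isomorphic to its dual representation. Then V carries a non-degenerate G-invariant alternating bilinear form (i.e. a non-degenerate form b with b(gv,gw)=b(v,w) for all g, and b(v,v)=0 for all v). -/
/-- Over an algebraically closed field of characteristic 2, a nontrivial
finite-dimensional irreducible self-dual representation carries a non-degenerate
invariant alternating bilinear form. -/
theorem stmt0 {k : Type*} [Field k] [IsAlgClosed k] [CharP k 2]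
    {G : Type*} [Group G]
    {V : Type*} [AddCommGroup V] [Module k V] [FiniteDimensional k V]
    (ρ : Representation k G V)
    (hnontriv : ∃ (g : G) (v : V), ρ g v ≠ v)
    (hirr : ∀ p : Submodule k V, (∀ g : G, p.map (ρ g) ≤ p) → p = ⊥ ∨ p = ⊤)
    (hselfdual : ∃ e : V ≃ₗ[k] Module.Dual k V, ∀ (g : G) (v : V),
      e (ρ g v) = ρ.dual g (e v)) :
    ∃ B : LinearMap.BilinForm k V,
      (∀ v : V, (∀ w : V, B v w = 0) → v = 0) ∧
      (∀ v : V, B v v = 0) ∧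
      (∀ (g : G) (v w : V), B (ρ g v) (ρ g w) = B v w) := by
  classical
  obtain ⟨e, he⟩ := hselfdual
  have hVnt : Nontrivial V := by
    obtain ⟨g, v, hv⟩ := hnontriv
    exact ⟨ρ g v, v, hv⟩
  have h2 : (2 : k) = 0 := by exact_mod_cast CharP.cast_eq_zero k 2
  have hchar : ∀ x : k, x + x = 0 := fun x => by linear_combination x * h2
  have hc1 : ∀ c : k, c * c = 1 → c = 1 := by
    intro c hc
    have h : (c + 1) * (c + 1) = 0 := by linear_combination hc + hchar c + h2
    have h' : c + 1 = 0 := by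
      rcases mul_eq_zero.mp h with h' | h' <;> exact h'
    linear_combination h' - h2
  -- the bilinear form from self-duality
  set B₀ : LinearMap.BilinForm k V := (e : V →ₗ[k] Module.Dual k V) with hB₀
  have hB₀def : ∀ v w, B₀ v w = e v w := fun v w => rfl
  have hcancel : ∀ (g : G) (w : V), ρ g⁻¹ (ρ g w) = w := by
    intro g w
    have h : ρ g⁻¹ * ρ g = 1 := by rw [← map_mul, inv_mul_cancel, map_one]
    calc ρ g⁻¹ (ρ g w) = (ρ g⁻¹ * ρ g) w := rfl
    _ = w := by rw [h]; rfl
  have hinv : ∀ (g : G) (v w : V), B₀ (ρ g v) (ρ g w) = B₀ v w := by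
    intro g v w
    have h1 : e (ρ g v) (ρ g w) = (ρ.dual g (e v)) (ρ g w) := by rw [he]
    have h2 : (ρ.dual g (e v)) (ρ g w) = e v (ρ g⁻¹ (ρ g w)) := rfl
    rw [hB₀def, hB₀def, h1, h2, hcancel]
  -- the flipped map is equivariant; Schur's lemma gives symmetry
  have hflip_equi : ∀ (g : G) (v : V),
      (B₀.flip) (ρ g v) = ρ.dual g ((B₀.flip) v) := by
    intro g v
    ext w
    show B₀ w (ρ g v) = B₀ (ρ g⁻¹ w) v
    calc B₀ w (ρ g v) = B₀ (ρ g⁻¹ w) (ρ g⁻¹ (ρ g v)) := (hinv g⁻¹ w (ρ g v)).symm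
    _ = B₀ (ρ g⁻¹ w) v := by rw [hcancel]
  set φ : V →ₗ[k] V := (e.symm : Module.Dual k V →ₗ[k] V) ∘ₗ B₀.flip with hφ
  have hφ_apply : ∀ v, e (φ v) = B₀.flip v := by
    intro v; simp [hφ]
  have hφ_comm : ∀ (g : G) (v : V), φ (ρ g v) = ρ g (φ v) := by
    intro g v
    apply e.injective
    rw [hφ_apply, hflip_equi, he, hφ_apply]
  -- Schur: φ is a scalar
  obtain ⟨c, hc⟩ := Module.End.exists_eigenvalue φ
  have heig : Module.End.eigenspace φ c = ⊤ := by
    have hmap : ∀ g : G, (Module.End.eigenspace φ c).map (ρ g) ≤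
        Module.End.eigenspace φ c := by
      intro g
      rintro w ⟨v, hv, rfl⟩
      simp only [SetLike.mem_coe] at hv
      rw [Module.End.mem_eigenspace_iff] at hv ⊢
      rw [hφ_comm, hv, map_smul]
    rcases hirr _ hmap with h | h
    · exact absurd h hc
    · exact h
  have hφ_eq : ∀ v : V, φ v = c • v := by
    intro v
    have := heig ▸ Submodule.mem_top (R := k) (M := V) (x := v)
    exact Module.End.mem_eigenspace_iff.mp this
  have hsymm0 : ∀ v w : V, B₀ w v = c * B₀ v w := by
    intro v w
    have h1 : e (φ v) = B₀.flip v := hφ_apply v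
    rw [hφ_eq, map_smul] at h1
    have h3 := LinearMap.congr_fun h1 w
    simp only [LinearMap.smul_apply, LinearMap.flip_apply, smul_eq_mul] at h3
    exact h3.symm
  -- c = 1
  have hcval : c = 1 := by
    obtain ⟨v, hv⟩ := exists_ne (0 : V)
    have hev : e v ≠ 0 := fun h => hv (by simpa using e.injective (by simpa using h))
    obtain ⟨w, hw⟩ : ∃ w, e v w ≠ 0 := by
      by_contra h
      push_neg at h
      exact hev (LinearMap.ext fun w => h w)
    apply hc1
    have h1 := hsymm0 v w
    have h2' := hsymm0 w v
    have : B₀ v w = c * (c * B₀ v w) := by rw [← h1, ← h2']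
    have h3 : (c * c - 1) * B₀ v w = 0 := by linear_combination -this
    rcases mul_eq_zero.mp h3 with h4 | h4
    · linear_combination h4
    · exact absurd h4 hw
  have hsymm : ∀ v w : V, B₀ w v = B₀ v w := by
    intro v w; rw [hsymm0 v w, hcval, one_mul]
  -- the submodule where the quadratic form vanishes
  have hWadd : ∀ v w : V, B₀ v v = 0 → B₀ w w = 0 → B₀ (v + w) (v + w) = 0 := by
    intro v w hv hw
    have : B₀ (v + w) (v + w) = B₀ v v + B₀ w w + (B₀ v w + B₀ v w) := by
      simp only [map_add, LinearMap.add_apply]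
      rw [hsymm v w]; ring
    rw [this, hv, hw, hchar (B₀ v w)]; ring
  set W : Submodule k V :=
    { carrier := {v | B₀ v v = 0}
      add_mem' := fun hv hw => hWadd _ _ hv hw
      zero_mem' := by simp
      smul_mem' := by
        intro a v hv
        simp only [Set.mem_setOf_eq] at hv ⊢
        simp [hv] } with hW
  have hWmem : ∀ v : V, v ∈ W ↔ B₀ v v = 0 := fun v => Iff.rfl
  have hWinv : ∀ g : G, W.map (ρ g) ≤ W := by
    intro g
    rintro w ⟨v, hv, rfl⟩
    show B₀ (ρ g v) (ρ g v) = 0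
    rw [hinv]
    exact hv
  have hnondeg : ∀ v : V, (∀ w : V, B₀ v w = 0) → v = 0 := by
    intro v hv
    have : e v = 0 := LinearMap.ext fun w => hv w
    simpa using e.injective (by simpa using this)
  rcases hirr W hWinv with hWbot | hWtop
  · -- W = ⊥ : derive a contradiction
    exfalso
    have hQzero : ∀ v : V, B₀ v v = 0 → v = 0 := by
      intro v hv
      have : v ∈ W := hv
      rw [hWbot] at this
      simpa using this
    -- square root map
    set s : k ≃+* k := (frobeniusEquiv k 2).symm with hs
    have hs_sq : ∀ a : k, s (a * a) = a := by
      intro a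
      have : a * a = frobenius k 2 a := by
        rw [frobenius_def]; ring
      rw [this, hs, frobeniusEquiv_symm_apply_frobenius]
    -- linear functional f v = s (B₀ v v)
    set f : V →ₗ[k] k :=
      { toFun := fun v => s (B₀ v v)
        map_add' := by
          intro v w
          have hqq : B₀ (v + w) (v + w) = B₀ v v + B₀ w w := by
            simp only [map_add, LinearMap.add_apply]
            rw [hsymm v w]
            linear_combination hchar (B₀ v w)
          show s (B₀ (v + w) (v + w)) = s (B₀ v v) + s (B₀ w w)
          rw [hqq, map_add]
        map_smul' := by
          intro a v
          show s (B₀ (a • v) (a • v)) = a * s (B₀ v v)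
          have hq : B₀ (a • v) (a • v) = (a * a) * (B₀ v v) := by
            simp only [map_smul, LinearMap.smul_apply, smul_eq_mul]; ring
          rw [hq]
          calc s (a * a * B₀ v v) = s (a * a) * s (B₀ v v) := by rw [map_mul]
          _ = a * s (B₀ v v) := by rw [hs_sq] } with hf
    have hf_inj : Function.Injective f := by
      rw [← LinearMap.ker_eq_bot]
      rw [Submodule.eq_bot_iff]
      intro v hv
      rw [LinearMap.mem_ker] at hv
      have : B₀ v v = 0 := by
        have := congrArg (frobeniusEquiv k 2) (show s (B₀ v v) = 0 from hv)
        simpa [hs] using this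
      exact hQzero v this
    have hrank : Module.finrank k V ≤ 1 := by
      have := LinearMap.finrank_le_finrank_of_injective hf_inj
      simpa using this
    have hrank1 : Module.finrank k V = 1 := le_antisymm hrank
      (by have := Module.finrank_pos (R := k) (M := V); omega)
    obtain ⟨v, hv0, hvspan⟩ := finrank_eq_one_iff'.mp hrank1
    obtain ⟨g, u, hu⟩ := hnontriv
    have hQv : B₀ v v ≠ 0 := fun h => hv0 (hQzero v h)
    obtain ⟨a, ha⟩ := hvspan (ρ g v)
    have : B₀ (ρ g v) (ρ g v) = B₀ v v := hinv g v v
    rw [← ha] at this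
    simp only [map_smul, LinearMap.smul_apply, smul_eq_mul] at this
    have haa : a * a = 1 := by
      rcases mul_eq_zero.mp (show (a * a - 1) * B₀ v v = 0 by linear_combination this) with h | h
      · linear_combination h
      · exact absurd h hQv
    have ha1 : a = 1 := hc1 a haa
    have hgv : ρ g v = v := by rw [← ha, ha1, one_smul]
    obtain ⟨b, hb⟩ := hvspan u
    apply hu
    rw [← hb, map_smul, hgv]
  · -- W = ⊤ : B₀ is alternating
    refine ⟨B₀, hnondeg, ?_, hinv⟩
    intro v
    have hvW : v ∈ W := hWtop ▸ Submodule.mem_top (R := k) (M := V) (x := v)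
    exact hvW
end

section
/- Let k be a field of characteristic 2 and let (V, b₁) and (W, b₂) be finite-dimensional k-vector spaces with non-degenerate alternating bilinear forms. Then there exists a quadratic form Q on V⊗W whose polarization is the tensor product form b (characterized by b(v⊗w, v'⊗w') = b₁(v,v')·b₂(w,w')) and such that Q(v⊗w)=0 for all v∈V, w∈W. In particular Q is non-degenerate and is invariant under any group acting on V and W preserving b₁ and b₂. -/
/-!
Choosing a basis of `V`, the alternating form `b₁` is `c - cᵀ` where `c` is the strictly upper
triangular part of its Gram matrix. Put `Q x = (c ⊗ b₂)(x, x)`. Its polarization is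
`c ⊗ b₂ + cᵀ ⊗ b₂ᵀ = (c - cᵀ) ⊗ b₂ = b₁ ⊗ b₂` because `b₂ᵀ = -b₂`, and
`Q (v ⊗ w) = c(v, v) b₂(w, w) = 0`. A quadratic form on `V ⊗ W` is determined by its
polarization and its values on pure tensors, which gives the invariance; non-degeneracy comes from
`det (A ⊗ B) = det A ^ m * det B ^ n`.
-/

open TensorProduct
open scoped Kronecker

namespace LinearMap.BilinForm

theorem exists_eq_sub_flip_of_isAlt {R M ι : Type*} [CommRing R] [AddCommGroup M] [Module R M]
    [Fintype ι] [LinearOrder ι] (e : Module.Basis ι R M) {b : LinearMap.BilinForm R M}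
    (hb : b.IsAlt) : ∃ c : LinearMap.BilinForm R M, b = c - c.flip := by
  set c := Matrix.toBilin e (.of fun i j => if i < j then b (e i) (e j) else 0)
  have hc : ∀ i j, c (e i) (e j) = if i < j then b (e i) (e j) else 0 := fun i j => by
    rw [← toMatrix_apply e, toMatrix_toBilin, Matrix.of_apply]
  refine ⟨c, ext_basis e fun i j => ?_⟩
  rw [sub_apply, flip_apply, hc, hc]
  rcases lt_trichotomy i j with h | rfl | h
  · simp [h, h.not_gt]
  · simp [hb.self_eq_zero]
  · simp [h, h.not_gt, ← LinearMap.IsAlt.neg hb (e j) (e i)]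

section CommRing

variable {R M N : Type*} [CommRing R] [AddCommGroup M] [Module R M] [AddCommGroup N] [Module R N]

theorem polarBilin_toQuadraticMap_tmul (c : LinearMap.BilinForm R M)
    {b₂ : LinearMap.BilinForm R N} (hb₂ : b₂.IsAlt) :
    (c.tmul b₂).toQuadraticMap.polarBilin = (c - c.flip).tmul b₂ := by
  refine TensorProduct.ext' fun v w => TensorProduct.ext' fun v' w' => ?_
  simp [LinearMap.BilinMap.polar_toQuadraticMap, ← LinearMap.IsAlt.neg hb₂ w w']
  ring

theorem tmul_compl₁₂_map (b₁ : LinearMap.BilinForm R M) (b₂ : LinearMap.BilinForm R N)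
    (f : M →ₗ[R] M) (g : N →ₗ[R] N) :
    (b₁.tmul b₂).compl₁₂ (map f g) (map f g) =
      LinearMap.BilinForm.tmul (b₁.compl₁₂ f f) (b₂.compl₁₂ g g) :=
  TensorProduct.ext' fun _ _ => TensorProduct.ext' fun _ _ => rfl

theorem toMatrix_tmul {ι κ : Type*} [Fintype ι] [DecidableEq ι] [Fintype κ] [DecidableEq κ]
    (e : Module.Basis ι R M) (f : Module.Basis κ R N)
    (b₁ : LinearMap.BilinForm R M) (b₂ : LinearMap.BilinForm R N) :
    toMatrix (e.tensorProduct f) (b₁.tmul b₂) = toMatrix e b₁ ⊗ₖ toMatrix f b₂ := by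
  ext ⟨i, j⟩ ⟨i', j'⟩
  simp [toMatrix_apply, mul_comm]

end CommRing

theorem Nondegenerate.tmul {k V W : Type*} [Field k]
    [AddCommGroup V] [Module k V] [FiniteDimensional k V]
    [AddCommGroup W] [Module k W] [FiniteDimensional k W]
    {b₁ : LinearMap.BilinForm k V} {b₂ : LinearMap.BilinForm k W}
    (h₁ : b₁.Nondegenerate) (h₂ : b₂.Nondegenerate) :
    LinearMap.BilinForm.Nondegenerate (b₁.tmul b₂) := by
  classical
  set e := Module.finBasis k V
  set f := Module.finBasis k W
  rw [nondegenerate_iff_det_ne_zero e] at h₁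
  rw [nondegenerate_iff_det_ne_zero f] at h₂
  rw [nondegenerate_iff_det_ne_zero (e.tensorProduct f), toMatrix_tmul, Matrix.det_kronecker]
  exact mul_ne_zero (pow_ne_zero _ h₁) (pow_ne_zero _ h₂)

end LinearMap.BilinForm

theorem QuadraticMap.ext_of_polarBilin_eq_of_tmul {R M N P : Type*} [CommRing R]
    [AddCommGroup M] [Module R M] [AddCommGroup N] [Module R N] [AddCommGroup P] [Module R P]
    {Q Q' : QuadraticMap R (M ⊗[R] N) P} (hpolar : Q.polarBilin = Q'.polarBilin)
    (htmul : ∀ m n, Q (m ⊗ₜ n) = Q' (m ⊗ₜ n)) : Q = Q' := by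
  ext x
  induction x using TensorProduct.induction_on with
  | zero => simp
  | tmul m n => exact htmul m n
  | add x y hx hy =>
    rw [QuadraticMap.map_add Q, QuadraticMap.map_add Q', hx, hy, ← polarBilin_apply_apply,
      ← polarBilin_apply_apply, hpolar]

theorem stmt2_general {k V W : Type*} [Field k]
    [AddCommGroup V] [Module k V] [FiniteDimensional k V]
    [AddCommGroup W] [Module k W] [FiniteDimensional k W]
    (b₁ : LinearMap.BilinForm k V) (b₂ : LinearMap.BilinForm k W)
    (h₁ : b₁.Nondegenerate) (halt₁ : ∀ v : V, b₁ v v = 0)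
    (h₂ : b₂.Nondegenerate) (halt₂ : ∀ w : W, b₂ w w = 0) :
    ∃ Q : QuadraticForm k (V ⊗[k] W),
      (∀ (v v' : V) (w w' : W),
        QuadraticMap.polar (⇑Q) (v ⊗ₜ[k] w) (v' ⊗ₜ[k] w') = b₁ v v' * b₂ w w') ∧
      (∀ (v : V) (w : W), Q (v ⊗ₜ[k] w) = 0) ∧
      (∀ x : V ⊗[k] W, (∀ y : V ⊗[k] W, QuadraticMap.polar (⇑Q) x y = 0) → Q x = 0 → x = 0) ∧
      (∀ (f : V →ₗ[k] V) (g : W →ₗ[k] W),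
        (∀ v v' : V, b₁ (f v) (f v') = b₁ v v') →
        (∀ w w' : W, b₂ (g w) (g w') = b₂ w w') →
        ∀ x : V ⊗[k] W, Q (TensorProduct.map f g x) = Q x) := by
  obtain ⟨c, hc⟩ := LinearMap.BilinForm.exists_eq_sub_flip_of_isAlt (Module.finBasis k V) halt₁
  set Q := (c.tmul b₂).toQuadraticMap
  have hpolar : Q.polarBilin = b₁.tmul b₂ := hc ▸ c.polarBilin_toQuadraticMap_tmul halt₂
  have hpure : ∀ v w, Q (v ⊗ₜ w) = 0 := fun v w => by simp [Q, halt₂]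
  refine ⟨Q, fun v v' w w' => ?_, hpure, fun x hx _ => ?_, fun f g hf hg x => ?_⟩
  · rw [← QuadraticMap.polarBilin_apply_apply, hpolar]
    simp [mul_comm]
  · refine (h₁.tmul h₂).1 x fun y => ?_
    rw [← hpolar, QuadraticMap.polarBilin_apply_apply, hx y]
  · have hf' : b₁.compl₁₂ f f = b₁ := LinearMap.ext₂ hf
    have hg' : b₂.compl₁₂ g g = b₂ := LinearMap.ext₂ hg
    have hQ : Q.comp (map f g) = Q := by
      refine QuadraticMap.ext_of_polarBilin_eq_of_tmul ?_ fun v w => ?_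
      · rw [QuadraticMap.polarBilin_comp, hpolar, LinearMap.BilinForm.tmul_compl₁₂_map, hf',
          hg']
      · rw [QuadraticMap.comp_apply, map_tmul, hpure, hpure]
    exact congr($hQ x)

/-- In characteristic 2, the tensor product of two symplectic spaces
carries a quadratic form whose polarization is the tensor product form and which
vanishes on pure tensors; in particular it is non-degenerate and invariant under
any pair of maps preserving the two alternating forms. -/
theorem stmt2 {k V W : Type*} [Field k] [CharP k 2]
    [AddCommGroup V] [Module k V] [FiniteDimensional k V]
    [AddCommGroup W] [Module k W] [FiniteDimensional k W]
    (b₁ : LinearMap.BilinForm k V) (b₂ : LinearMap.BilinForm k W)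
    (h₁ : b₁.Nondegenerate) (halt₁ : ∀ v : V, b₁ v v = 0)
    (h₂ : b₂.Nondegenerate) (halt₂ : ∀ w : W, b₂ w w = 0) :
    ∃ Q : QuadraticForm k (V ⊗[k] W),
      (∀ (v v' : V) (w w' : W),
        QuadraticMap.polar (⇑Q) (v ⊗ₜ[k] w) (v' ⊗ₜ[k] w') = b₁ v v' * b₂ w w') ∧
      (∀ (v : V) (w : W), Q (v ⊗ₜ[k] w) = 0) ∧
      (∀ x : V ⊗[k] W, (∀ y : V ⊗[k] W, QuadraticMap.polar (⇑Q) x y = 0) → Q x = 0 → x = 0) ∧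
      (∀ (f : V →ₗ[k] V) (g : W →ₗ[k] W),
        (∀ v v' : V, b₁ (f v) (f v') = b₁ v v') →
        (∀ w w' : W, b₂ (g w) (g w') = b₂ w w') →
        ∀ x : V ⊗[k] W, Q (TensorProduct.map f g x) = Q x) :=
  stmt2_general b₁ b₂ h₁ halt₁ h₂ halt₂
end

section
/- Let i ≥ 0 and let x ≥ 2^(i+1) be a natural number with x ≡ 2^i (mod 2^(i+1)). If 0 ≤ k ≤ 2^i and the binary expansion of x − 2k contains that of 2^i − k (meaning every binary digit of 2^i − k is either 0 or equal to the corresponding digit of x − 2k), then k = 0 or k = 2^i. -/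
/-!
Write `m = 2^i - k = 2^t c` with `c` odd. If `0 < k < 2^i` then `t < i`, and
`x - 2k ≡ 2^i + 2m (mod 2^(i+1))` is divisible by `2^(t+1)`, so bit `t` of `x - 2k` is `0`
while bit `t` of `m` is `1`. If instead `x < 2k`, then `x - 2k = 0` and containment forces `m = 0`.
-/

namespace Nat

theorem testBit_eq_false_of_two_pow_succ_dvd {n t : ℕ} (h : 2 ^ (t + 1) ∣ n) :
    n.testBit t = false := by
  obtain ⟨c, rfl⟩ := h
  simp [testBit_two_pow_mul]

theorem testBit_two_pow_mul_odd {t c : ℕ} (hc : Odd c) : (2 ^ t * c).testBit t = true := by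
  simpa [testBit_two_pow_mul, testBit_zero, ← Nat.odd_iff] using hc

theorem not_two_pow_succ_dvd_of_two_pow_mul_odd_and_eq {n t c : ℕ} (hc : Odd c)
    (h : 2 ^ t * c &&& n = 2 ^ t * c) : ¬ 2 ^ (t + 1) ∣ n := by
  intro hdvd
  have hbit := congrArg (testBit · t) h
  simp only [testBit_and, testBit_two_pow_mul_odd hc,
    testBit_eq_false_of_two_pow_succ_dvd hdvd, Bool.and_false] at hbit
  exact Bool.false_ne_true hbit

theorem two_pow_succ_dvd_sub_two_mul {i t c x k : ℕ} (ht : t < i)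
    (hx : x % 2 ^ (i + 1) = 2 ^ i) (hk : k ≤ 2 ^ i) (h2k : 2 * k ≤ x)
    (hm : 2 ^ i - k = 2 ^ t * c) : 2 ^ (t + 1) ∣ x - 2 * k := by
  have hdiv := Nat.div_add_mod x (2 ^ (i + 1))
  have hpow : 2 ^ (i + 1) = 2 * 2 ^ i := Nat.pow_succ'
  have hsum : x - 2 * k + 2 ^ (i + 1) =
      2 ^ (i + 1) * (x / 2 ^ (i + 1)) + 2 ^ i + 2 * (2 ^ t * c) := by
    omega
  have hti : 2 ^ (t + 1) ∣ 2 ^ (i + 1) := Nat.pow_dvd_pow 2 (by omega)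
  refine (Nat.dvd_add_left hti).mp (hsum ▸ ?_)
  refine Nat.dvd_add (Nat.dvd_add (hti.mul_right _) (Nat.pow_dvd_pow 2 ht)) ?_
  exact ⟨c, by rw [Nat.pow_succ']; ring⟩

end Nat

theorem stmt3_general (i x K : ℕ) (hmod : x % 2 ^ (i + 1) = 2 ^ i)
    (hK : K ≤ 2 ^ i) (hcont : (2 ^ i - K) &&& (x - 2 * K) = 2 ^ i - K) :
    K = 0 ∨ K = 2 ^ i := by
  by_cases h2K : x < 2 * K
  · rw [Nat.sub_eq_zero_of_le h2K.le, Nat.and_zero] at hcont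
    omega
  by_cases hm : 2 ^ i - K = 0
  · omega
  obtain ⟨t, c, hc, hmtc⟩ := Nat.exists_eq_two_pow_mul_odd hm
  rw [hmtc] at hcont
  by_cases ht : t < i
  · exact absurd (Nat.two_pow_succ_dvd_sub_two_mul ht hmod hK (by omega) hmtc)
      (Nat.not_two_pow_succ_dvd_of_two_pow_mul_odd_and_eq hc hcont)
  · have : 2 ^ i ≤ 2 ^ t * c :=
      le_mul_of_le_of_one_le (Nat.pow_le_pow_right two_pos (by omega)) hc.pos
    omega

/-- If `x ≥ 2^(i+1)`, `x ≡ 2^i (mod 2^(i+1))`, `k ≤ 2^i` and the binary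
expansion of `x - 2k` contains that of `2^i - k` (bitwise AND), then `k = 0` or `k = 2^i`. -/
theorem stmt3 (i x K : ℕ) (hx : 2 ^ (i + 1) ≤ x) (hmod : x % 2 ^ (i + 1) = 2 ^ i)
    (hK : K ≤ 2 ^ i) (hcont : (2 ^ i - K) &&& (x - 2 * K) = 2 ^ i - K) :
    K = 0 ∨ K = 2 ^ i :=
  stmt3_general i x K hmod hK hcont
end

section
/- Let i ≥ 0 and let x ≥ 2^(i+1) be a natural number with x ≡ 2^i + t (mod 2^(i+1)) for some t with 0 ≤ t < 2^i. If j is a natural number with 0 ≤ 2j ≤ t and x − 2j contains 2^i − j to base 2, then j = 0. -/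
/-!
Reducing modulo `2^i` preserves containment, and `x - 2j ≡ t - 2j (mod 2^i)` without borrowing
since `2j ≤ t`. So `2^i - j`, which is below `2^i`, is at most `t - 2j < 2^i - 2j`, forcing `j = 0`.
-/

theorem Nat.mod_two_pow_le_of_and_eq {a b : ℕ} (h : a &&& b = a) (n : ℕ) :
    a % 2 ^ n ≤ b % 2 ^ n :=
  calc a % 2 ^ n = (a &&& b) % 2 ^ n := by rw [h]
    _ = a % 2 ^ n &&& b % 2 ^ n := Nat.and_mod_two_pow
    _ ≤ b % 2 ^ n := Nat.and_le_right

theorem Nat.mod_two_pow_of_mod_two_pow_succ_eq {x i t : ℕ} (h : x % 2 ^ (i + 1) = 2 ^ i + t) :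
    x % 2 ^ i = t % 2 ^ i := by
  rw [← Nat.mod_mod_of_dvd x (pow_dvd_pow 2 i.le_succ), h, Nat.add_mod_left]

theorem stmt4_general (i x t j : ℕ) (ht : t < 2 ^ i)
    (hmod : x % 2 ^ (i + 1) = 2 ^ i + t)
    (hj : 2 * j ≤ t) (hcont : (2 ^ i - j) &&& (x - 2 * j) = 2 ^ i - j) :
    j = 0 := by
  by_contra hj0
  have hx_mod : x % 2 ^ i = t := by
    rw [Nat.mod_two_pow_of_mod_two_pow_succ_eq hmod, Nat.mod_eq_of_lt ht]
  have hsub_mod : (x - 2 * j) % 2 ^ i = t - 2 * j := by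
    rw [← Nat.mod_sub_of_le (hx_mod ▸ hj), hx_mod]
  have hle := Nat.mod_two_pow_le_of_and_eq hcont i
  rw [hsub_mod, Nat.mod_eq_of_lt (by omega : 2 ^ i - j < 2 ^ i)] at hle
  omega

/-- If `x ≥ 2^(i+1)`, `x ≡ 2^i + t (mod 2^(i+1))` with `0 ≤ t < 2^i`,
`2j ≤ t` and `x - 2j` contains `2^i - j` to base 2, then `j = 0`. -/
theorem stmt4 (i x t j : ℕ) (ht : t < 2 ^ i) (hx : 2 ^ (i + 1) ≤ x)
    (hmod : x % 2 ^ (i + 1) = 2 ^ i + t)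
    (hj : 2 * j ≤ t) (hcont : (2 ^ i - j) &&& (x - 2 * j) = 2 ^ i - j) :
    j = 0 :=
  stmt4_general i x t j ht hmod hj hcont
end

section
/- Let i ≥ 0, and let l, t be natural numbers with 0 ≤ t < 2^i, l ≥ t + 2^i, and l + 1 ≡ 2^i + t (mod 2^(i+1)). Then the binomial coefficient C(l−t, 2^i) is divisible by 4 if and only if l + 1 ≡ 2^i + t (mod 2^(i+2)). -/
private lemma sum2 (n : ℕ) (hn : 0 < n) :
    (Nat.digits 2 n).sum = n % 2 + (Nat.digits 2 (n / 2)).sum := by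
  rw [Nat.digits_def' (by norm_num : 1 < 2) hn]
  simp

/-- digit sum splits across a shift -/
private lemma hsum : ∀ (j a b : ℕ), b < 2 ^ j →
    (Nat.digits 2 (2 ^ j * a + b)).sum = (Nat.digits 2 a).sum + (Nat.digits 2 b).sum := by
  intro j
  induction j with
  | zero => intro a b hb; interval_cases b; simp
  | succ j ih =>
    intro a b hb
    rcases Nat.eq_zero_or_pos a with rfl | ha
    · simp
    have hpow : (2:ℕ) ^ (j + 1) = 2 * 2 ^ j := by ring
    have hj1 : (1:ℕ) ≤ 2 ^ j := Nat.one_le_two_pow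
    have hpos : 0 < 2 ^ (j + 1) * a + b := by
      have : 1 * 1 ≤ 2 ^ (j + 1) * a := Nat.mul_le_mul (by omega) ha
      omega
    have h2 : (2 ^ (j + 1) * a + b) % 2 = b % 2 := by
      have h : 2 ^ (j + 1) * a = 2 * (2 ^ j * a) := by ring
      omega
    have h3 : (2 ^ (j + 1) * a + b) / 2 = 2 ^ j * a + b / 2 := by
      have h : 2 ^ (j + 1) * a = 2 * (2 ^ j * a) := by ring
      omega
    rw [sum2 _ hpos, h2, h3, ih a (b / 2) (by omega)]
    rcases Nat.eq_zero_or_pos b with rfl | hbpos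
    · simp
    · rw [sum2 b hbpos]; omega

private lemma l0 : ∀ k, 0 < k →
    (Nat.digits 2 k).sum ≤ (Nat.digits 2 (k - 1)).sum + 1 := by
  intro k
  induction k using Nat.strong_induction_on with
  | _ k ih =>
    intro hk
    rcases Nat.even_or_odd k with ⟨j, hj⟩ | ⟨j, hj⟩
    · -- k = 2j, j ≥ 1
      have hj1 : 0 < j := by omega
      have h1 : (Nat.digits 2 k).sum = (Nat.digits 2 j).sum := by
        rw [sum2 k hk, show k % 2 = 0 by omega, show k / 2 = j by omega]; omega
      have h2 : (Nat.digits 2 (k - 1)).sum = (Nat.digits 2 (j - 1)).sum + 1 := by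
        rw [sum2 (k - 1) (by omega), show (k - 1) % 2 = 1 by omega,
          show (k - 1) / 2 = j - 1 by omega]
        omega
      have := ih j (by omega) hj1
      omega
    · -- k = 2j + 1
      have h1 : (Nat.digits 2 k).sum = (Nat.digits 2 j).sum + 1 := by
        rw [sum2 k hk, show k % 2 = 1 by omega, show k / 2 = j by omega]
        omega
      have h2 : (Nat.digits 2 (k - 1)).sum = (Nat.digits 2 j).sum := by
        rcases Nat.eq_zero_or_pos j with rfl | hj1
        · rw [show k - 1 = 0 by omega]
        · rw [sum2 (k - 1) (by omega), show (k - 1) % 2 = 0 by omega,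
            show (k - 1) / 2 = j by omega]; omega
      omega

private lemma l1 (m : ℕ) (hm : 0 < m) :
    2 ∣ m ↔ (Nat.digits 2 m).sum ≤ (Nat.digits 2 (m - 1)).sum := by
  constructor
  · rintro ⟨j, hj⟩
    have hj1 : 0 < j := by omega
    have h1 : (Nat.digits 2 m).sum = (Nat.digits 2 j).sum := by
      rw [sum2 m hm, show m % 2 = 0 by omega, show m / 2 = j by omega]; omega
    have h2 : (Nat.digits 2 (m - 1)).sum = (Nat.digits 2 (j - 1)).sum + 1 := by
      rw [sum2 (m - 1) (by omega), show (m - 1) % 2 = 1 by omega,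
        show (m - 1) / 2 = j - 1 by omega]
      omega
    have := l0 j hj1
    omega
  · intro h
    by_contra hodd
    have hmod2 : m % 2 = 1 := by omega
    obtain ⟨j, hj⟩ : ∃ j, m = 2 * j + 1 := ⟨m / 2, by omega⟩
    have h1 : (Nat.digits 2 m).sum = (Nat.digits 2 j).sum + 1 := by
      rw [sum2 m hm, show m % 2 = 1 by omega, show m / 2 = j by omega]
      omega
    have h2 : (Nat.digits 2 (m - 1)).sum = (Nat.digits 2 j).sum := by
      rcases Nat.eq_zero_or_pos j with rfl | hj1
      · rw [show m - 1 = 0 by omega]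
      · rw [sum2 (m - 1) (by omega), show (m - 1) % 2 = 0 by omega,
          show (m - 1) / 2 = j by omega]; omega
    omega

private lemma l2 : ∀ j : ℕ, (Nat.digits 2 (2 ^ j - 1)).sum = j := by
  intro j
  induction j with
  | zero => simp
  | succ j ih =>
    have h2j : (1:ℕ) ≤ 2 ^ j := Nat.one_le_two_pow
    have hpow : (2:ℕ) ^ (j + 1) = 2 * 2 ^ j := by ring
    rw [sum2 (2 ^ (j + 1) - 1) (by omega), show (2 ^ (j + 1) - 1) % 2 = 1 by omega,
      show (2 ^ (j + 1) - 1) / 2 = 2 ^ j - 1 by omega, ih]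
    omega

/-- If `0 ≤ t < 2^i`, `l ≥ t + 2^i` and `l + 1 ≡ 2^i + t (mod 2^(i+1))`,
then `4 ∣ C(l - t, 2^i)` iff `l + 1 ≡ 2^i + t (mod 2^(i+2))`. -/
theorem stmt5 (i l t : ℕ) (ht : t < 2 ^ i) (hl : t + 2 ^ i ≤ l)
    (hmod : (l + 1) % 2 ^ (i + 1) = 2 ^ i + t) :
    4 ∣ Nat.choose (l - t) (2 ^ i) ↔ (l + 1) % 2 ^ (i + 2) = 2 ^ i + t := by
  have h2i : (1:ℕ) ≤ 2 ^ i := Nat.one_le_two_pow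
  have hp1 : (2:ℕ) ^ (i + 1) = 2 * 2 ^ i := by ring
  have hp2 : (2:ℕ) ^ (i + 2) = 4 * 2 ^ i := by ring
  obtain ⟨q, hq⟩ : ∃ q, l + 1 = 2 ^ (i + 1) * q + (2 ^ i + t) :=
    ⟨(l + 1) / 2 ^ (i + 1), by rw [← hmod]; exact (Nat.div_add_mod (l + 1) (2 ^ (i + 1))).symm⟩
  have hq1 : 1 ≤ q := by
    rcases Nat.eq_zero_or_pos q with h | h
    · rw [h, Nat.mul_zero] at hq; omega
    · exact h
  obtain ⟨q', rfl⟩ : ∃ q', q = q' + 1 := ⟨q - 1, by omega⟩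
  have hmul : 2 ^ (i + 1) * (q' + 1) = 2 ^ (i + 1) * q' + 2 ^ (i + 1) := by ring
  set n := l - t with hndef
  have hn : n = 2 ^ (i + 1) * (q' + 1) + (2 ^ i - 1) := by omega
  have hkn : 2 ^ i ≤ n := by omega
  -- digit sums
  have hsn : (Nat.digits 2 n).sum = (Nat.digits 2 (q' + 1)).sum + i := by
    rw [hn, hsum (i + 1) (q' + 1) (2 ^ i - 1) (by omega), l2 i]
  have hnk : n - 2 ^ i = 2 ^ (i + 1) * q' + (2 ^ (i + 1) - 1) := by omega
  have hsnk : (Nat.digits 2 (n - 2 ^ i)).sum = (Nat.digits 2 q').sum + (i + 1) := by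
    rw [hnk, hsum (i + 1) q' (2 ^ (i + 1) - 1) (by omega), l2 (i + 1)]
  have hsk : (Nat.digits 2 (2 ^ i)).sum = 1 := by
    have := hsum i 1 0 (by omega)
    simpa using this
  -- Kummer
  have hfact : Fact (Nat.Prime 2) := ⟨Nat.prime_two⟩
  have hkummer := @sub_one_mul_padicValNat_choose_eq_sub_sum_digits 2 (2 ^ i) n hfact hkn
  rw [hsn, hsnk, hsk] at hkummer
  rw [show (2:ℕ) - 1 = 1 from rfl, one_mul] at hkummer
  have hq0 : (Nat.digits 2 (q' + 1)).sum ≤ (Nat.digits 2 q').sum + 1 := by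
    have := l0 (q' + 1) (by omega)
    simpa using this
  have hchoose_pos : 0 < Nat.choose n (2 ^ i) := Nat.choose_pos hkn
  have hdvd : 4 ∣ Nat.choose n (2 ^ i) ↔ 2 ≤ padicValNat 2 (Nat.choose n (2 ^ i)) := by
    have := @padicValNat_dvd_iff_le 2 hfact (Nat.choose n (2 ^ i)) 2 (by omega)
    rw [← this]; norm_num
  have hl1 : 2 ∣ (q' + 1) ↔ (Nat.digits 2 (q' + 1)).sum ≤ (Nat.digits 2 q').sum := by
    have := l1 (q' + 1) (by omega)
    simpa using this
  have hleft : 4 ∣ Nat.choose n (2 ^ i) ↔ 2 ∣ (q' + 1) := by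
    rw [hdvd, hl1]
    omega
  -- right-hand side
  have hdm := Nat.div_add_mod (q' + 1) 2
  have hmle : (q' + 1) % 2 ≤ 1 := by omega
  have e1 : l + 1 = 2 ^ (i + 2) * ((q' + 1) / 2)
      + (2 ^ (i + 1) * ((q' + 1) % 2) + (2 ^ i + t)) := by
    rw [hq]
    rw [show (2:ℕ) ^ (i + 1) * (q' + 1) =
      2 ^ (i + 1) * (2 * ((q' + 1) / 2) + (q' + 1) % 2) by rw [hdm]]
    ring
  have hbound : 2 ^ (i + 1) * ((q' + 1) % 2) + (2 ^ i + t) < 2 ^ (i + 2) := by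
    have : 2 ^ (i + 1) * ((q' + 1) % 2) ≤ 2 ^ (i + 1) * 1 := Nat.mul_le_mul_left _ hmle
    omega
  have hm : (l + 1) % 2 ^ (i + 2) = 2 ^ (i + 1) * ((q' + 1) % 2) + (2 ^ i + t) := by
    rw [e1, Nat.mul_add_mod, Nat.mod_eq_of_lt hbound]
  have hright : (l + 1) % 2 ^ (i + 2) = 2 ^ i + t ↔ 2 ∣ (q' + 1) := by
    rw [hm]
    constructor
    · intro h
      have h0 : 2 ^ (i + 1) * ((q' + 1) % 2) = 0 := by omega
      rcases Nat.mul_eq_zero.mp h0 with h' | h'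
      · exfalso; omega
      · omega
    · intro h
      have h' : (q' + 1) % 2 = 0 := by omega
      rw [h']; simp
  rw [hleft, hright]
end

section
/- Let i ≥ 0 and let l, t be natural numbers with 0 ≤ t < 2^i, l ≥ t + 2^i, and l + 1 ≡ 2^i + t (mod 2^(i+1)). Then the binomial coefficient C(l−t, 2^i) is even. -/
/-- If `0 ≤ t < 2^i`, `l ≥ t + 2^i` and `l + 1 ≡ 2^i + t (mod 2^(i+1))`,
then the binomial coefficient `C(l - t, 2^i)` is even. -/
theorem stmt6 (i l t : ℕ) (ht : t < 2 ^ i) (hl : t + 2 ^ i ≤ l)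
    (hmod : (l + 1) % 2 ^ (i + 1) = 2 ^ i + t) :
    2 ∣ Nat.choose (l - t) (2 ^ i) := by
  haveI : Fact (Nat.Prime 2) := ⟨Nat.prime_two⟩
  set q := (l + 1) / 2 ^ (i + 1) with hq
  have hdecomp : l + 1 = 2 ^ (i + 1) * q + (2 ^ i + t) := by
    have h := Nat.div_add_mod (l + 1) (2 ^ (i + 1))
    rw [hmod] at h
    rw [hq]
    omega
  have hn : l - t = 2 ^ (i + 1) * q + 2 ^ i - 1 := by
    have h2i : 1 ≤ 2 ^ i := Nat.one_le_two_pow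
    omega
  have hpow : 2 ^ (i + 1) = 2 ^ i * 2 := by ring
  have hdiv : (l - t) / 2 ^ i = 2 * q := by
    rw [hn, hpow]
    have h2i : 1 ≤ 2 ^ i := Nat.one_le_two_pow
    rw [show 2 ^ i * 2 * q + 2 ^ i - 1 = 2 ^ i * (2 * q) + (2 ^ i - 1) by ring_nf; omega]
    rw [Nat.mul_add_div (by positivity), Nat.div_eq_of_lt (by omega)]
    omega
  have hkdiv : (2 ^ i) / 2 ^ i = 1 := Nat.div_self (by positivity)
  have hcong := Choose.choose_modEq_choose_mul_prod_range_choose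
    (n := l - t) (k := 2 ^ i) (p := 2) i
  rw [hdiv, hkdiv] at hcong
  simp only [Nat.choose_one_right] at hcong
  have h2 : ((2 * q : ℕ) * ∏ j ∈ Finset.range i,
      Nat.choose ((l - t) / 2 ^ j % 2) (2 ^ i / 2 ^ j % 2) : ℤ) ≡ 0 [ZMOD 2] := by
    refine Int.modEq_zero_iff_dvd.mpr ?_
    exact Dvd.dvd.mul_right (by push_cast; exact ⟨q, rfl⟩) _
  have := hcong.trans h2
  have hdvd : (2 : ℤ) ∣ (Nat.choose (l - t) (2 ^ i) : ℤ) :=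
    Int.modEq_zero_iff_dvd.mp this
  exact_mod_cast hdvd
end

section
/- Let i ≥ 1 and let x be a natural number with x ≡ 2^i (mod 2^(i+1)). If 0 ≤ k < 2^i and x + 2k contains k to base 2, then k = 0. -/
/-- If `i ≥ 1`, `x ≡ 2^i (mod 2^(i+1))`, `0 ≤ k < 2^i` and `x + 2k`
contains `k` to base 2 (bitwise AND), then `k = 0`. -/
theorem stmt15 (i x K : ℕ) (hi : 1 ≤ i) (hmod : x % 2 ^ (i + 1) = 2 ^ i)
    (hK : K < 2 ^ i) (hcont : K &&& (x + 2 * K) = K) :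
    K = 0 := by
  by_contra hK0
  -- let j be the 2-adic valuation of K (the lowest set bit)
  set j := padicValNat 2 K with hj
  have hdvd : 2 ^ j ∣ K := pow_padicValNat_dvd
  have hndvd : ¬ 2 ^ (j + 1) ∣ K := pow_succ_padicValNat_not_dvd (p := 2) hK0
  obtain ⟨m, hm⟩ := hdvd
  have hmodd : m % 2 = 1 := by
    rcases Nat.mod_two_eq_zero_or_one m with h | h
    · exfalso; apply hndvd
      obtain ⟨c, hc⟩ := Nat.dvd_of_mod_eq_zero h
      exact ⟨c, by rw [hm, hc, pow_succ]; ring⟩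
    · exact h
  have hm0 : m ≠ 0 := by rintro rfl; simp at hm; omega
  -- j < i
  have hji : j < i := by
    have h1 : 2 ^ j ≤ K := hm ▸ Nat.le_mul_of_pos_right _ (Nat.pos_of_ne_zero hm0)
    have := lt_of_le_of_lt h1 hK
    exact (Nat.pow_lt_pow_iff_right (by norm_num)).1 this
  -- bit j of K is true
  have hbitK : K.testBit j = true := by
    rw [Nat.testBit_eq_decide_div_mod_eq, hm, Nat.mul_div_cancel_left _ (Nat.two_pow_pos j), hmodd]
    simp
  -- 2^(j+1) divides x + 2K
  have hdvdx : 2 ^ (j + 1) ∣ x := by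
    have hx : x = 2 ^ (i + 1) * (x / 2 ^ (i + 1)) + 2 ^ i := by
      rw [← hmod]; exact (Nat.div_add_mod x (2 ^ (i + 1))).symm
    rw [hx]
    exact Nat.dvd_add (Dvd.dvd.mul_right (pow_dvd_pow 2 (by omega)) _)
      (pow_dvd_pow 2 (by omega))
  have hdvd2K : 2 ^ (j + 1) ∣ 2 * K := by
    rw [hm, pow_succ]
    exact ⟨m, by ring⟩
  obtain ⟨c, hc⟩ := Nat.dvd_add hdvdx hdvd2K
  -- bit j of x + 2K is false
  have hbitS : (x + 2 * K).testBit j = false := by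
    have h2 : 2 ^ (j + 1) * c = 2 ^ j * (2 * c) := by rw [pow_succ]; ring
    rw [Nat.testBit_eq_decide_div_mod_eq, hc, h2,
      Nat.mul_div_cancel_left _ (Nat.two_pow_pos j)]
    simp [Nat.mul_mod_right]
  -- contradiction with the AND condition
  have := congrArg (fun n => n.testBit j) hcont
  simp only [Nat.testBit_and, hbitK, hbitS, Bool.and_false] at this
  exact Bool.false_ne_true this
end
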